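/- Let f : ℝⁿ → ℝ be convex and differentiable with L-Lipschitz gradient, and define x_{k+1} = x_k - (1/L)∇f(x_k). If the set of minimizers X̄ is nonempty with optimal value f̄, then f(x_k) - f̄ ≤ L·dist(x₀, X̄)²/(2k) for all k ≥ 1. -/

import Mathlib

/-! The descent lemma gives `f (x (k+1)) ≤ f (x k) - ‖∇f (x k)‖² / (2L)`; adding the gradient
inequality of convexity at an arbitrary point `z` turns this into
`f (x (k+1)) - f z ≤ L/2 (‖x k - z‖² - ‖x (k+1) - z‖²)`. These telescope, and as `f (x k)` is
nonincreasing, `k (f (x k) - f z) ≤ L/2 ‖x 0 - z‖²`; taking `z` over the minimizers and passing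
to the infimum of the distances gives the bound. -/

open scoped RealInnerProductSpace

open Set Metric

theorem le_infDist_sq {α : Type*} [PseudoMetricSpace α] {s : Set α} (hs : s.Nonempty) {x : α}
    {r : ℝ} (h : ∀ y ∈ s, r ≤ dist x y ^ 2) : r ≤ infDist x s ^ 2 :=
  (Real.sqrt_le_left infDist_nonneg).1 <|
    (le_infDist hs).2 fun y hy => (Real.sqrt_le_left dist_nonneg).2 (h y hy)

theorem nat_mul_le_of_antitone_of_le_sub {a d : ℕ → ℝ} (ha : Antitone a) (hd : ∀ i, 0 ≤ d i)
    (h : ∀ i, a (i + 1) ≤ d i - d (i + 1)) (k : ℕ) : k * a k ≤ d 0 := by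
  suffices ∀ k : ℕ, k * a k + d k ≤ d 0 from (le_add_of_nonneg_right (hd k)).trans (this k)
  intro k
  induction k with
  | zero => simp
  | succ k ih =>
    have : (k : ℝ) * a (k + 1) ≤ k * a k := mul_le_mul_of_nonneg_left (ha k.le_succ) k.cast_nonneg
    push_cast
    linarith [h k]

section

variable {E : Type*} [NormedAddCommGroup E] [InnerProductSpace ℝ E] [CompleteSpace E]
  {f : E → ℝ}

theorem HasGradientAt.hasDerivAt_comp_add_smul {g x v : E} {t : ℝ}
    (hf : HasGradientAt f g (x + t • v)) :
    HasDerivAt (fun s : ℝ => f (x + s • v)) ⟪g, v⟫ t := by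
  have hline : HasDerivAt (fun s : ℝ => x + s • v) v t := by
    simpa using ((hasDerivAt_id t).smul_const v).const_add x
  exact hf.hasFDerivAt.comp_hasDerivAt t hline

theorem ConvexOn.add_inner_le_of_hasGradientAt (hconv : ConvexOn ℝ univ f) {g x : E}
    (hf : HasGradientAt f g x) (y : E) : f x + ⟪g, y - x⟫ ≤ f y := by
  have hline : ConvexOn ℝ univ fun t : ℝ => f (x + t • (y - x)) :=
    (hconv.translate_right x).comp_linearMap (LinearMap.toSpanSingleton ℝ E (y - x))
  have hderiv : HasDerivAt (fun t : ℝ => f (x + t • (y - x))) ⟪g, y - x⟫ 0 :=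
    HasGradientAt.hasDerivAt_comp_add_smul (by simpa using hf)
  have := hline.le_slope_of_hasDerivAt (mem_univ 0) (mem_univ 1) one_pos hderiv
  simp only [slope_def_field, one_smul, add_sub_cancel, zero_smul, add_zero, sub_zero,
    div_one] at this
  linarith

variable {f' : E → E} {L : ℝ}

theorem le_add_inner_add_sq_of_lipschitz_gradient (hf : ∀ x, HasGradientAt f (f' x) x)
    (hlip : ∀ x y, ‖f' x - f' y‖ ≤ L * ‖x - y‖) (x v : E) :
    f (x + v) ≤ f x + ⟪f' x, v⟫ + L / 2 * ‖v‖ ^ 2 := by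
  have hB : ∀ t : ℝ, HasDerivAt (fun s : ℝ => f x + s * ⟪f' x, v⟫ + L / 2 * ‖v‖ ^ 2 * s ^ 2)
      (⟪f' x, v⟫ + L / 2 * ‖v‖ ^ 2 * (2 * t)) t := fun t =>
    ((((hasDerivAt_id' t).mul_const _).const_add (f x)).fun_add
      ((hasDerivAt_pow 2 t).const_mul _)).congr_deriv (by simp)
  have hφ : ∀ t : ℝ, HasDerivAt (fun s : ℝ => f (x + s • v)) ⟪f' (x + t • v), v⟫ t :=
    fun t => (hf _).hasDerivAt_comp_add_smul
  have hderiv_le : ∀ t ∈ Ico (0 : ℝ) 1,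
      ⟪f' (x + t • v), v⟫ ≤ ⟪f' x, v⟫ + L / 2 * ‖v‖ ^ 2 * (2 * t) := fun t ht => by
    have hgrad : ‖f' (x + t • v) - f' x‖ ≤ L * (t * ‖v‖) := by
      simpa [norm_smul, abs_of_nonneg ht.1] using hlip (x + t • v) x
    calc ⟪f' (x + t • v), v⟫ = ⟪f' x, v⟫ + ⟪f' (x + t • v) - f' x, v⟫ := by
          rw [inner_sub_left]; ring
      _ ≤ ⟪f' x, v⟫ + L * (t * ‖v‖) * ‖v‖ := by
          gcongr
          exact (real_inner_le_norm _ _).trans (by gcongr)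
      _ = ⟪f' x, v⟫ + L / 2 * ‖v‖ ^ 2 * (2 * t) := by ring
  have := image_le_of_deriv_right_le_deriv_boundary
    (fun t _ => (hφ t).continuousAt.continuousWithinAt) (fun t _ => (hφ t).hasDerivWithinAt)
    (by simp) (fun t _ => (hB t).continuousAt.continuousWithinAt)
    (fun t _ => (hB t).hasDerivWithinAt) hderiv_le (right_mem_Icc.2 zero_le_one)
  simpa using this

theorem gradient_step_le (hL : L ≠ 0) (hf : ∀ x, HasGradientAt f (f' x) x)
    (hlip : ∀ x y, ‖f' x - f' y‖ ≤ L * ‖x - y‖) (x : E) :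
    f (x - (1 / L) • f' x) ≤ f x - ‖f' x‖ ^ 2 / (2 * L) := by
  have := le_add_inner_add_sq_of_lipschitz_gradient hf hlip x (-((1 / L) • f' x))
  rw [← sub_eq_add_neg, inner_neg_right, real_inner_smul_right, real_inner_self_eq_norm_sq,
    norm_neg, norm_smul, mul_pow, Real.norm_eq_abs, sq_abs] at this
  convert this using 1
  field_simp
  ring

theorem gradient_step_sub_le (hL : L ≠ 0) (hconv : ConvexOn ℝ univ f)
    (hf : ∀ x, HasGradientAt f (f' x) x) (hlip : ∀ x y, ‖f' x - f' y‖ ≤ L * ‖x - y‖)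
    (x z : E) :
    f (x - (1 / L) • f' x) - f z ≤
      L / 2 * (‖x - z‖ ^ 2 - ‖x - (1 / L) • f' x - z‖ ^ 2) := by
  have hsupp := hconv.add_inner_le_of_hasGradientAt (hf x) z
  rw [← neg_sub x z, inner_neg_right] at hsupp
  have hdist : ‖x - (1 / L) • f' x - z‖ ^ 2 =
      ‖x - z‖ ^ 2 - 2 * (1 / L) * ⟪f' x, x - z⟫ + (1 / L) ^ 2 * ‖f' x‖ ^ 2 := by
    rw [sub_right_comm, norm_sub_sq_real, real_inner_smul_right, real_inner_comm, norm_smul,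
      mul_pow, Real.norm_eq_abs, sq_abs]
    ring
  calc f (x - (1 / L) • f' x) - f z ≤ ⟪f' x, x - z⟫ - ‖f' x‖ ^ 2 / (2 * L) := by
        linarith [gradient_step_le hL hf hlip x]
    _ = L / 2 * (‖x - z‖ ^ 2 - ‖x - (1 / L) • f' x - z‖ ^ 2) := by
        rw [hdist]; field_simp; ring

theorem gradient_descent_rate (hL : 0 < L) (hconv : ConvexOn ℝ univ f)
    (hf : ∀ x, HasGradientAt f (f' x) x) (hlip : ∀ x y, ‖f' x - f' y‖ ≤ L * ‖x - y‖)
    {x : ℕ → E} (hrec : ∀ k, x (k + 1) = x k - (1 / L) • f' (x k)) (z : E) (k : ℕ) :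
    k * (f (x k) - f z) ≤ L / 2 * ‖x 0 - z‖ ^ 2 := by
  refine nat_mul_le_of_antitone_of_le_sub (a := fun i => f (x i) - f z)
    (d := fun i => L / 2 * ‖x i - z‖ ^ 2) ?_
    (fun i => by positivity) (fun i => ?_) k
  · refine antitone_nat_of_succ_le fun i => ?_
    have hstep := gradient_step_le hL.ne' hf hlip (x i)
    rw [← hrec] at hstep
    have : 0 ≤ ‖f' (x i)‖ ^ 2 / (2 * L) := by positivity
    linarith
  · rw [← mul_sub, hrec]
    exact gradient_step_sub_le hL.ne' hconv hf hlip (x i) z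

end

theorem gradient_method_rate
    {E : Type*} [NormedAddCommGroup E] [InnerProductSpace ℝ E] [CompleteSpace E]
    (f : E → ℝ) (f' : E → E) (L : ℝ) (hL : 0 < L)
    (hconv : ConvexOn ℝ Set.univ f)
    (hdiff : ∀ x : E, HasGradientAt f (f' x) x)
    (hlip : ∀ x y : E, ‖f' x - f' y‖ ≤ L * ‖x - y‖)
    (x : ℕ → E) (hrec : ∀ k, x (k + 1) = x k - (1 / L) • f' (x k))
    (Xbar : Set E) (hXbar : Xbar = {y : E | ∀ u : E, f y ≤ f u})
    (hne : Xbar.Nonempty)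
    (fbar : ℝ) (hfbar : fbar = ⨅ y : E, f y) :
    ∀ k : ℕ, 1 ≤ k →
      f (x k) - fbar ≤ L * Metric.infDist (x 0) Xbar ^ 2 / (2 * k) := by
  intro k hk
  subst hXbar hfbar
  have hdist : 2 * k * (f (x k) - ⨅ y, f y) / L ≤ infDist (x 0) _ ^ 2 :=
    le_infDist_sq hne fun z hz => by
      rw [ciInf_eq_of_forall_ge_of_forall_gt_exists_lt hz fun _ hw => ⟨z, hw⟩, div_le_iff₀ hL,
        dist_eq_norm]
      linarith [gradient_descent_rate hL hconv hdiff hlip hrec z k]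
  rw [div_le_iff₀ hL] at hdist
  rw [le_div_iff₀ (mul_pos two_pos (Nat.cast_pos.2 hk))]
  linarith
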